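/- (Typical projector existence) For any density operator ρ on a finite-dimensional Hilbert space and any ε, δ > 0, there exists n₀ such that for all n ≥ n₀ there is an orthogonal projector Π on H^{⊗n} commuting with ρ^{⊗n} satisfying Tr(ρ^{⊗n} Π) ≥ 1 − ε and Tr Π ≤ 2^{n(H(ρ)+δ)}. -/

import Mathlib

open Matrix Kronecker BigOperators ComplexOrder

/-- Trace norm `‖A‖₁ = Tr √(Aᴴ A)`. -/
noncomputable def traceNorm {n : Type*} [Fintype n] [DecidableEq n]
    (A : Matrix n n ℂ) : ℝ :=
  (((Matrix.posSemidef_conjTranspose_mul_self A).1.eigenvectorUnitary.1 *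
      diagonal (((↑) : ℝ → ℂ) ∘ (√·) ∘ (Matrix.posSemidef_conjTranspose_mul_self A).1.eigenvalues) *
      (star (Matrix.posSemidef_conjTranspose_mul_self A).1.eigenvectorUnitary :
        Matrix n n ℂ)).trace).re

/-- Von Neumann entropy (base 2), via eigenvalues; `0` for non-Hermitian input. -/
noncomputable def vnEntropy {n : Type*} [Fintype n] [DecidableEq n]
    (ρ : Matrix n n ℂ) : ℝ :=
  if h : ρ.IsHermitian then
    -∑ i, (h.eigenvalues i) * Real.logb 2 (h.eigenvalues i)
  else 0

/-- A density operator: positive semidefinite with unit trace. -/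
def IsDensity {n : Type*} [Fintype n] (ρ : Matrix n n ℂ) : Prop :=
  ρ.PosSemidef ∧ ρ.trace = 1

/-- Rank-one projector `|v⟩⟨v|`. -/
noncomputable def proj {n : Type*} (v : n → ℂ) : Matrix n n ℂ :=
  Matrix.vecMulVec v (star v)

/-- Partial trace over the second tensor factor. -/
noncomputable def ptraceSnd {a b : Type*} [Fintype b]
    (ρ : Matrix (a × b) (a × b) ℂ) : Matrix a a ℂ :=
  Matrix.of fun i j => ∑ k, ρ (i, k) (j, k)

/-- Partial trace over the first tensor factor. -/
noncomputable def ptraceFst {a b : Type*} [Fintype a]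
    (ρ : Matrix (a × b) (a × b) ℂ) : Matrix b b ℂ :=
  Matrix.of fun i j => ∑ k, ρ (k, i) (k, j)

/-- Quantum mutual information `I(A;B) = H(A) + H(B) − H(AB)`. -/
noncomputable def mutualInfo {a b : Type*} [Fintype a] [Fintype b]
    [DecidableEq a] [DecidableEq b] (ρ : Matrix (a × b) (a × b) ℂ) : ℝ :=
  vnEntropy (ptraceSnd ρ) + vnEntropy (ptraceFst ρ) - vnEntropy ρ

/-- `n`-fold tensor power of a matrix. -/
noncomputable def tpow {d : ℕ} (ρ : Matrix (Fin d) (Fin d) ℂ) (n : ℕ) :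
    Matrix (Fin n → Fin d) (Fin n → Fin d) ℂ :=
  Matrix.of fun f g => ∏ i, ρ (f i) (g i)

/-- The cq state obtained by measuring the `A` part of a bipartite state with POVM `Λ`:
`ρ^{XB} = Σ_x |x⟩⟨x| ⊗ Tr_A((Λ_x ⊗ I)ρ)`. -/
noncomputable def measureA {a b m : Type*} [Fintype a] [DecidableEq m]
    (Λ : m → Matrix a a ℂ) (ρ : Matrix (a × b) (a × b) ℂ) :
    Matrix (m × b) (m × b) ℂ :=
  Matrix.of fun xi yj =>
    if xi.1 = yj.1 then ∑ k, ∑ l, (Λ xi.1) k l * ρ (l, xi.2) (k, yj.2) else 0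

/-- Unitarity for (possibly rectangular between index types) matrices. -/
def IsUnitaryMat {p q : Type*} [Fintype p] [Fintype q] [DecidableEq p] [DecidableEq q]
    (U : Matrix p q ℂ) : Prop :=
  U * Uᴴ = 1 ∧ Uᴴ * U = 1

/-!
Diagonalise `ρ = U diag(p) Uᴴ`. Then `ρ^{⊗n}` is diagonalised by `U^{⊗n}`, with eigenvalues the
product weights `∏ i, p (f i)` of sequences `f : Fin n → Fin d`, and `Π` is the projector onto the
eigenvectors of weight at least `2^{-n(H+δ)}`. Since the weights sum to `1`, there are at most
`2^{n(H+δ)}` of them. A sequence of smaller positive weight has total surprisal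
`∑ i, -log₂ p (f i)` exceeding its mean `n H` by more than `n δ`; the surprisals of the letters are
independent, so the variance of the sum is `n` times the variance `V` of one letter's surprisal,
and Chebyshev bounds the mass of such sequences by `V / (n δ²)`.
-/

open Finset

section ProductDistribution

variable {α : Type*} [Fintype α]

lemma sum_pi_fin_succ {M : Type*} [AddCommMonoid M] {n : ℕ} (F : (Fin (n + 1) → α) → M) :
    ∑ f, F f = ∑ a, ∑ g : Fin n → α, F (Fin.cons a g) := by
  rw [← Fintype.sum_prod_type', ← (Fin.consEquiv fun _ => α).sum_comp]
  rfl

variable (p : α → ℝ)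

lemma sum_pi_prod_eq_one (hp : ∑ a, p a = 1) (n : ℕ) :
    ∑ f : Fin n → α, ∏ i, p (f i) = 1 := by
  rw [← Fintype.prod_sum, hp, prod_const_one]

lemma sum_pi_prod_mul_sum (hp : ∑ a, p a = 1) (Y : α → ℝ) (n : ℕ) :
    ∑ f : Fin n → α, (∏ i, p (f i)) * ∑ i, Y (f i) = n * ∑ a, p a * Y a := by
  induction n with
  | zero => simp
  | succ n ih =>
    simp only [sum_pi_fin_succ, Fin.prod_univ_succ, Fin.sum_univ_succ, Fin.cons_zero,
      Fin.cons_succ]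
    have key : ∀ a, ∑ g : Fin n → α, p a * (∏ i, p (g i)) * (Y a + ∑ i, Y (g i))
        = p a * Y a + p a * (n * ∑ b, p b * Y b) := by
      intro a
      simp only [mul_add, sum_add_distrib, ← mul_sum, ← sum_mul, sum_pi_prod_eq_one p hp,
        mul_assoc, ih]
      ring
    simp only [key, sum_add_distrib, ← sum_mul, hp]
    push_cast
    ring

lemma sum_pi_prod_mul_sum_sq (hp : ∑ a, p a = 1) (Y : α → ℝ) (hY : ∑ a, p a * Y a = 0)
    (n : ℕ) :
    ∑ f : Fin n → α, (∏ i, p (f i)) * (∑ i, Y (f i)) ^ 2 = n * ∑ a, p a * Y a ^ 2 := by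
  induction n with
  | zero => simp
  | succ n ih =>
    simp only [sum_pi_fin_succ, Fin.prod_univ_succ, Fin.sum_univ_succ, Fin.cons_zero,
      Fin.cons_succ]
    have key : ∀ a, ∑ g : Fin n → α, p a * (∏ i, p (g i)) * (Y a + ∑ i, Y (g i)) ^ 2
        = p a * Y a ^ 2 + 2 * (p a * Y a) * (n * ∑ b, p b * Y b)
          + p a * (n * ∑ b, p b * Y b ^ 2) := by
      intro a
      have hmean := sum_pi_prod_mul_sum p hp Y n
      calc _ = ∑ g : Fin n → α, (p a * Y a ^ 2 * ∏ i, p (g i)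
              + 2 * (p a * Y a) * ((∏ i, p (g i)) * ∑ i, Y (g i))
              + p a * ((∏ i, p (g i)) * (∑ i, Y (g i)) ^ 2)) := by
            refine sum_congr rfl fun g _ => ?_
            ring
        _ = _ := by
          simp only [sum_add_distrib, ← mul_sum, sum_pi_prod_eq_one p hp, hmean, ih, mul_one]
    simp only [key, sum_add_distrib, ← sum_mul, hp, hY]
    push_cast
    ring

end ProductDistribution

lemma sum_filter_le_sum_mul_sq_div {ι : Type*} [Fintype ι] (w Z : ι → ℝ) (hw : ∀ i, 0 ≤ w i)
    {t : ℝ} (ht : 0 < t) :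
    ∑ i ∈ univ.filter (fun i => t ≤ Z i), w i ≤ (∑ i, w i * Z i ^ 2) / t ^ 2 := by
  rw [le_div_iff₀ (by positivity), sum_mul]
  calc ∑ i ∈ univ.filter (fun i => t ≤ Z i), w i * t ^ 2
      ≤ ∑ i ∈ univ.filter (fun i => t ≤ Z i), w i * Z i ^ 2 := by
        refine sum_le_sum fun i hi => mul_le_mul_of_nonneg_left ?_ (hw i)
        exact pow_le_pow_left₀ ht.le (mem_filter.1 hi).2 2
    _ ≤ ∑ i, w i * Z i ^ 2 :=
        sum_le_sum_of_subset_of_nonneg (subset_univ _) fun i _ _ => mul_nonneg (hw i) (sq_nonneg _)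

section TypicalSet

variable {α : Type*} [Fintype α] (p : α → ℝ)

noncomputable def shannonEntropy : ℝ := -∑ a, p a * Real.logb 2 (p a)

noncomputable def typicalSet (n : ℕ) (r : ℝ) : Finset (Fin n → α) :=
  univ.filter fun f => (2 : ℝ) ^ (-(n * r)) ≤ ∏ i, p (f i)

lemma card_typicalSet_le (hp0 : ∀ a, 0 ≤ p a) (hp1 : ∑ a, p a = 1) (n : ℕ) (r : ℝ) :
    (#(typicalSet p n r) : ℝ) ≤ 2 ^ (n * r) := by
  have hmass : #(typicalSet p n r) * (2 : ℝ) ^ (-(n * r)) ≤ 1 :=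
    calc #(typicalSet p n r) * (2 : ℝ) ^ (-(n * r))
        = ∑ _f ∈ typicalSet p n r, (2 : ℝ) ^ (-(n * r)) := by rw [sum_const, nsmul_eq_mul]
      _ ≤ ∑ f ∈ typicalSet p n r, ∏ i, p (f i) := sum_le_sum fun f hf => (mem_filter.1 hf).2
      _ ≤ ∑ f : Fin n → α, ∏ i, p (f i) :=
          sum_le_sum_of_subset_of_nonneg (subset_univ _) fun f _ _ =>
            prod_nonneg fun i _ => hp0 _
      _ = 1 := sum_pi_prod_eq_one p hp1 n
  rwa [Real.rpow_neg zero_le_two, ← div_eq_mul_inv, div_le_one (by positivity)] at hmass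

lemma lt_sum_sub_shannonEntropy_of_notMem_typicalSet {n : ℕ} {δ : ℝ} {f : Fin n → α}
    (hf : f ∉ typicalSet p n (shannonEntropy p + δ)) (hpos : 0 < ∏ i, p (f i)) :
    n * δ < ∑ i, (-Real.logb 2 (p (f i)) - shannonEntropy p) := by
  have hlt : ∏ i, p (f i) < 2 ^ (-(n * (shannonEntropy p + δ))) := by
    simpa [typicalSet] using hf
  rw [← Real.logb_lt_iff_lt_rpow one_lt_two hpos,
    Real.logb_prod _ _ fun i _ => (prod_ne_zero_iff.1 hpos.ne' i (mem_univ i))] at hlt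
  simp only [sum_sub_distrib, sum_neg_distrib, sum_const, card_univ, Fintype.card_fin,
    nsmul_eq_mul]
  linarith

lemma sum_mul_neg_logb_sub_shannonEntropy (hp1 : ∑ a, p a = 1) :
    ∑ a, p a * (-Real.logb 2 (p a) - shannonEntropy p) = 0 := by
  simp only [mul_sub, sum_sub_distrib, ← sum_mul, hp1, shannonEntropy, mul_neg, sum_neg_distrib]
  ring

lemma sum_compl_typicalSet_le [DecidableEq α] (hp0 : ∀ a, 0 ≤ p a) (hp1 : ∑ a, p a = 1)
    {n : ℕ} (hn : 0 < n) {δ : ℝ} (hδ : 0 < δ) :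
    ∑ f ∈ (typicalSet p n (shannonEntropy p + δ))ᶜ, ∏ i, p (f i)
      ≤ (∑ a, p a * (-Real.logb 2 (p a) - shannonEntropy p) ^ 2) / (n * δ ^ 2) := by
  set Y := fun a => -Real.logb 2 (p a) - shannonEntropy p
  have hw : ∀ f : Fin n → α, 0 ≤ ∏ i, p (f i) := fun f => prod_nonneg fun i _ => hp0 _
  -- Sequences of weight zero are discarded first: `Real.logb 2 0 = 0` says nothing about them.
  calc ∑ f ∈ (typicalSet p n (shannonEntropy p + δ))ᶜ, ∏ i, p (f i)
      = ∑ f ∈ (typicalSet p n (shannonEntropy p + δ))ᶜ with ∏ i, p (f i) ≠ 0, ∏ i, p (f i) :=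
        (sum_filter_ne_zero _).symm
    _ ≤ ∑ f ∈ univ.filter (fun f : Fin n → α => n * δ ≤ ∑ i, Y (f i)), ∏ i, p (f i) := by
        refine sum_le_sum_of_subset_of_nonneg (fun f hf => ?_) fun f _ _ => hw f
        obtain ⟨hf, hne⟩ := mem_filter.1 hf
        exact mem_filter.2 ⟨mem_univ f, (lt_sum_sub_shannonEntropy_of_notMem_typicalSet p
          (mem_compl.1 hf) (lt_of_le_of_ne (hw f) (Ne.symm hne))).le⟩
    _ ≤ (∑ f : Fin n → α, (∏ i, p (f i)) * (∑ i, Y (f i)) ^ 2) / (n * δ) ^ 2 :=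
        sum_filter_le_sum_mul_sq_div _ _ hw (by positivity)
    _ = (∑ a, p a * Y a ^ 2) / (n * δ ^ 2) := by
        rw [sum_pi_prod_mul_sum_sq p hp1 Y (sum_mul_neg_logb_sub_shannonEntropy p hp1)]
        field_simp

lemma exists_le_sum_typicalSet [DecidableEq α] (hp0 : ∀ a, 0 ≤ p a) (hp1 : ∑ a, p a = 1)
    {ε δ : ℝ} (hε : 0 < ε) (hδ : 0 < δ) :
    ∃ n₀ : ℕ, ∀ n ≥ n₀, 1 - ε ≤ ∑ f ∈ typicalSet p n (shannonEntropy p + δ), ∏ i, p (f i) := by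
  set V := ∑ a, p a * (-Real.logb 2 (p a) - shannonEntropy p) ^ 2
  obtain ⟨n₀, hn₀⟩ := exists_nat_gt (V / (ε * δ ^ 2))
  refine ⟨n₀, fun n hn => ?_⟩
  have hV : 0 ≤ V := sum_nonneg fun a _ => mul_nonneg (hp0 a) (sq_nonneg _)
  have hn : V / (ε * δ ^ 2) < n := hn₀.trans_le (Nat.cast_le.2 hn)
  have hnpos : 0 < n := Nat.cast_pos.1 ((div_nonneg hV (by positivity)).trans_lt hn)
  have htail : V / (n * δ ^ 2) ≤ ε := by
    rw [div_lt_iff₀ (by positivity)] at hn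
    rw [div_le_iff₀ (by positivity)]
    linarith
  have hsplit := sum_add_sum_compl (typicalSet p n (shannonEntropy p + δ))
    fun f : Fin n → α => ∏ i, p (f i)
  rw [sum_pi_prod_eq_one p hp1] at hsplit
  linarith [sum_compl_typicalSet_le p hp0 hp1 hnpos hδ]

end TypicalSet

section TensorPower

variable {d : ℕ}

lemma tpow_mul (A B : Matrix (Fin d) (Fin d) ℂ) (n : ℕ) :
    tpow (A * B) n = tpow A n * tpow B n := by
  ext f g
  simp only [tpow, mul_apply, of_apply, Fintype.prod_sum, prod_mul_distrib]

lemma tpow_conjTranspose (A : Matrix (Fin d) (Fin d) ℂ) (n : ℕ) :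
    tpow Aᴴ n = (tpow A n)ᴴ := by
  ext f g
  simp [tpow, conjTranspose_apply, star_prod]

lemma tpow_diagonal (a : Fin d → ℂ) (n : ℕ) :
    tpow (diagonal a) n = diagonal fun f => ∏ i, a (f i) := by
  ext f g
  by_cases hfg : f = g
  · simp [tpow, hfg]
  · obtain ⟨i, hi⟩ := Function.ne_iff.1 hfg
    simp only [tpow, of_apply, diagonal_apply_ne _ hfg]
    exact prod_eq_zero (mem_univ i) (diagonal_apply_ne a hi)

lemma tpow_one (n : ℕ) : tpow (1 : Matrix (Fin d) (Fin d) ℂ) n = 1 := by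
  simpa using tpow_diagonal (d := d) 1 n

lemma conjTranspose_tpow_mul_tpow {U : Matrix (Fin d) (Fin d) ℂ} (hU : Uᴴ * U = 1) (n : ℕ) :
    (tpow U n)ᴴ * tpow U n = 1 := by
  rw [← tpow_conjTranspose, ← tpow_mul, hU, tpow_one]

lemma tpow_mul_diagonal_mul_conjTranspose (U : Matrix (Fin d) (Fin d) ℂ) (a : Fin d → ℂ)
    (n : ℕ) :
    tpow (U * diagonal a * Uᴴ) n
      = tpow U n * diagonal (fun f => ∏ i, a (f i)) * (tpow U n)ᴴ := by
  rw [tpow_mul, tpow_mul, tpow_diagonal, tpow_conjTranspose]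

end TensorPower

section UnitaryConjugation

variable {ι : Type*} [Fintype ι] [DecidableEq ι]

lemma mul_diagonal_mul_conjTranspose_mul {W : Matrix ι ι ℂ} (hW : Wᴴ * W = 1) (a b : ι → ℂ) :
    W * diagonal a * Wᴴ * (W * diagonal b * Wᴴ) = W * diagonal (a * b) * Wᴴ := by
  simp only [Matrix.mul_assoc, ← Matrix.mul_assoc Wᴴ W, hW, Matrix.one_mul]
  rw [← Matrix.mul_assoc (diagonal a), diagonal_mul_diagonal]
  rfl

lemma trace_mul_diagonal_mul_conjTranspose {W : Matrix ι ι ℂ} (hW : Wᴴ * W = 1) (a : ι → ℂ) :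
    (W * diagonal a * Wᴴ).trace = ∑ i, a i := by
  rw [trace_mul_cycle, hW, Matrix.one_mul, trace_diagonal]

/-- For unitary `W`, the orthogonal projector onto the span of the columns of `W` indexed by `s`. -/
noncomputable def spanProjector (W : Matrix ι ι ℂ) (s : Finset ι) : Matrix ι ι ℂ :=
  W * diagonal (fun i => if i ∈ s then 1 else 0) * Wᴴ

lemma isHermitian_spanProjector (W : Matrix ι ι ℂ) (s : Finset ι) :
    (spanProjector W s).IsHermitian :=
  isHermitian_mul_mul_conjTranspose W <| isHermitian_diagonal_iff.2 fun i => by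
    split_ifs <;> simp

variable {W : Matrix ι ι ℂ} (hW : Wᴴ * W = 1) (s : Finset ι)
include hW

lemma spanProjector_mul_self : spanProjector W s * spanProjector W s = spanProjector W s := by
  rw [spanProjector, mul_diagonal_mul_conjTranspose_mul hW]
  refine congrArg (fun e => W * diagonal e * Wᴴ) (funext fun i => ?_)
  by_cases hi : i ∈ s <;> simp [hi]

lemma spanProjector_mul_comm (a : ι → ℂ) :
    spanProjector W s * (W * diagonal a * Wᴴ) = W * diagonal a * Wᴴ * spanProjector W s := by
  rw [spanProjector, mul_diagonal_mul_conjTranspose_mul hW, mul_diagonal_mul_conjTranspose_mul hW,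
    mul_comm]

lemma trace_mul_spanProjector (a : ι → ℂ) :
    (W * diagonal a * Wᴴ * spanProjector W s).trace = ∑ i ∈ s, a i := by
  rw [spanProjector, mul_diagonal_mul_conjTranspose_mul hW,
    trace_mul_diagonal_mul_conjTranspose hW]
  simp [Pi.mul_apply, mul_ite]

lemma trace_spanProjector : (spanProjector W s).trace = #s := by
  rw [spanProjector, trace_mul_diagonal_mul_conjTranspose hW, sum_boole]
  simp

end UnitaryConjugation

namespace Matrix.IsHermitian

variable {ι : Type*} [Fintype ι] [DecidableEq ι] {A : Matrix ι ι ℂ} (hA : A.IsHermitian)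
include hA

lemma sum_eigenvalues_eq_one (htr : A.trace = 1) : ∑ i, hA.eigenvalues i = 1 := by
  have htrace := hA.trace_eq_sum_eigenvalues
  rw [htr, ← RCLike.ofReal_sum, ← RCLike.ofReal_one, RCLike.ofReal_inj] at htrace
  exact htrace.symm

lemma vnEntropy_eq : vnEntropy A = shannonEntropy hA.eigenvalues :=
  dif_pos hA

lemma eq_eigenvectorUnitary_mul_diagonal :
    A = (hA.eigenvectorUnitary : Matrix ι ι ℂ)
      * diagonal (Complex.ofReal ∘ hA.eigenvalues) * (hA.eigenvectorUnitary : Matrix ι ι ℂ)ᴴ := by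
  simpa [star_eq_conjTranspose] using hA.spectral_theorem

end Matrix.IsHermitian

theorem typical_projector_exists {d : ℕ} (ρ : Matrix (Fin d) (Fin d) ℂ)
    (hρ : IsDensity ρ) (ε δ : ℝ) (hε : 0 < ε) (hδ : 0 < δ) :
    ∃ n₀ : ℕ, ∀ n ≥ n₀, ∃ P : Matrix (Fin n → Fin d) (Fin n → Fin d) ℂ,
      P.IsHermitian ∧ P * P = P ∧ P * tpow ρ n = tpow ρ n * P ∧
      1 - ε ≤ (tpow ρ n * P).trace.re ∧
      P.trace.re ≤ (2 : ℝ) ^ ((n : ℝ) * (vnEntropy ρ + δ)) := by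
  obtain ⟨hpsd, htr⟩ := hρ
  have hH : ρ.IsHermitian := hpsd.1
  set p := hH.eigenvalues
  have hp0 : ∀ a, 0 ≤ p a := hpsd.eigenvalues_nonneg
  have hp1 : ∑ a, p a = 1 := hH.sum_eigenvalues_eq_one htr
  set U : Matrix (Fin d) (Fin d) ℂ := ↑hH.eigenvectorUnitary
  have hU : Uᴴ * U = 1 := Unitary.coe_star_mul_self hH.eigenvectorUnitary
  obtain ⟨n₀, hn₀⟩ := exists_le_sum_typicalSet p hp0 hp1 hε hδ
  refine ⟨n₀, fun n hn => ?_⟩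
  set W := tpow U n
  have hW : Wᴴ * W = 1 := conjTranspose_tpow_mul_tpow hU n
  set T := typicalSet p n (shannonEntropy p + δ)
  have hρn : tpow ρ n = W * diagonal (fun f => ((∏ i, p (f i) : ℝ) : ℂ)) * Wᴴ := by
    rw [hH.eq_eigenvectorUnitary_mul_diagonal, tpow_mul_diagonal_mul_conjTranspose]
    push_cast
    rfl
  refine ⟨spanProjector W T, isHermitian_spanProjector W T, spanProjector_mul_self hW T,
    ?_, ?_, ?_⟩
  · rw [hρn, spanProjector_mul_comm hW]
  · rw [hρn, trace_mul_spanProjector hW]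
    exact_mod_cast hn₀ n hn
  · rw [trace_spanProjector hW, Complex.natCast_re, hH.vnEntropy_eq]
    exact card_typicalSet_le p hp0 hp1 n _
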